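/- Lemma (enabling monotony): Let f be a BN of dimension n and x̂, ŷ ∈ {0,1,↗,↘}^n such that for every i, if x̂_i is Boolean then ŷ_i = x̂_i. Then for any transition t of N(f), enab(t, ⟨ŷ⟩) ≥ 0.5 implies enab(t, ⟨x̂⟩) ≥ 0.5. -/

import Mathlib

open Relation Filter

/-! ### Boolean networks and their semantics -/

abbrev Config (n : ℕ) := Fin n → Bool
abbrev BN (n : ℕ) := Config n → Fin n → Bool

def Delta {n : ℕ} (x y : Config n) : Set (Fin n) := {i | x i ≠ y i}

def fa {n : ℕ} (f : BN n) (x y : Config n) : Prop :=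
  ∃ i, Delta x y = {i} ∧ f x i = y i

def syn {n : ℕ} (f : BN n) (x y : Config n) : Prop := ∀ i, f x i = y i

def ga {n : ℕ} (f : BN n) (x y : Config n) : Prop := ∀ i ∈ Delta x y, f x i = y i

/-! ### Most permissive semantics -/

inductive MPV where
  | b : Bool → MPV
  | up : MPV
  | down : MPV
deriving DecidableEq

abbrev MPConfig (n : ℕ) := Fin n → MPV

def toMP {n : ℕ} (x : Config n) : MPConfig n := fun i => .b (x i)

def beta {n : ℕ} (xh : MPConfig n) : Set (Config n) :=
  {x | ∀ i v, xh i = .b v → x i = v}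

def mpStep {n : ℕ} (f : BN n) (xh yh : MPConfig n) : Prop :=
  ∃ i, (∀ j, j ≠ i → xh j = yh j) ∧ xh i ≠ yh i ∧
    ((xh i = .up ∧ yh i = .b true) ∨
     (xh i = .down ∧ yh i = .b false) ∨
     (xh i ≠ .b true ∧ yh i = .up ∧ ∃ x ∈ beta xh, f x i = true) ∨
     (xh i ≠ .b false ∧ yh i = .down ∧ ∃ x ∈ beta xh, f x i = false))

def mp {n : ℕ} (f : BN n) (x y : Config n) : Prop :=
  ReflTransGen (mpStep f) (toMP x) (toMP y)

/-! ### Petri nets (discrete and continuous) -/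

structure Net (P T : Type) where
  wPT : P → T → ℕ
  wTP : T → P → ℕ

def dfire {P T : Type} (N : Net P T) (t : T) (M M' : P → ℕ) : Prop :=
  (∀ p, N.wPT p t ≤ M p) ∧ ∀ p, M' p = M p - N.wPT p t + N.wTP t p

def dReach {P T : Type} (N : Net P T) : (P → ℕ) → (P → ℕ) → Prop :=
  ReflTransGen (fun M M' => ∃ t, dfire N t M M')

def cfire {P T : Type} (N : Net P T) (t : T) (α : ℝ) (m m' : P → ℝ) : Prop :=
  0 ≤ α ∧ (∀ p, α * N.wPT p t ≤ m p) ∧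
    ∀ p, m' p = m p - α * N.wPT p t + α * N.wTP t p

def cReach {P T : Type} (N : Net P T) : (P → ℝ) → (P → ℝ) → Prop :=
  ReflTransGen (fun m m' => ∃ t α, cfire N t α m m')

def limReach {P T : Type} (N : Net P T) (m m' : P → ℝ) : Prop :=
  ∃ ms : ℕ → P → ℝ, ms 0 = m ∧
    (∀ k, ∃ t α, cfire N t α (ms k) (ms (k+1))) ∧
    Tendsto ms atTop (nhds m')

def IsTrap {P T : Type} (N : Net P T) (S : Set P) : Prop :=
  ∀ t, (∃ p ∈ S, 0 < N.wPT p t) → ∃ p ∈ S, 0 < N.wTP t p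

def enabPos {P T : Type} (N : Net P T) (t : T) (m : P → ℝ) : Prop :=
  ∀ p, 0 < N.wPT p t → 0 < m p

def enabGe {P T : Type} (N : Net P T) (t : T) (m : P → ℝ) (c : ℝ) : Prop :=
  ∀ p, 0 < N.wPT p t → c * N.wPT p t ≤ m p

/-! ### Petri net encoding of Boolean networks -/

abbrev Clause (n : ℕ) := Fin n → Option Bool

def satC {n : ℕ} (z : Config n) (C : Clause n) : Prop :=
  ∀ j v, C j = some v → z j = v

structure ETrans (n : ℕ) where
  i : Fin n
  s : Bool
  C : Clause n

abbrev EPlace (n : ℕ) := Fin n × Bool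

def encNet (n : ℕ) : Net (EPlace n) (ETrans n) where
  wPT := fun p t =>
    if p.1 = t.i then (if p.2 = !t.s then 1 else 0)
    else (if t.C p.1 = some p.2 then 1 else 0)
  wTP := fun t p =>
    if p.1 = t.i then (if p.2 = t.s then 1 else 0)
    else (if t.C p.1 = some p.2 then 1 else 0)

def mu {n : ℕ} (xh : MPConfig n) : Set (EPlace n → ℝ) :=
  {m | (∀ p, 0 ≤ m p) ∧ ∀ i,
    m (i, false) + m (i, true) = 1 ∧
    (∀ v, xh i = .b v → m (i, v) = 1) ∧
    ((xh i = .up ∨ xh i = .down) →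
      0 < m (i, false) ∧ m (i, false) < 1 ∧ 0 < m (i, true) ∧ m (i, true) < 1)}

noncomputable def canon {n : ℕ} (xh : MPConfig n) : EPlace n → ℝ := fun p =>
  match xh p.1 with
  | .b v => if p.2 = v then 1 else 0
  | _ => 1/2

def validT {n : ℕ} (D : Fin n → Bool → Set (Clause n)) (t : ETrans n) : Prop :=
  t.C ∈ D t.i t.s

def IsDNF {n : ℕ} (f : BN n) (D : Fin n → Bool → Set (Clause n)) : Prop :=
  (∀ i s z, (∃ C ∈ D i s, satC z C) ↔ (z i = !s ∧ f z i = s)) ∧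
  (∀ i s C, C ∈ D i s → C i = some (!s))

def cReachG {P T : Type} (N : Net P T) (good : T → Prop) :
    (P → ℝ) → (P → ℝ) → Prop :=
  ReflTransGen (fun m m' => ∃ t, good t ∧ ∃ α, cfire N t α m m')

def climReachG {P T : Type} (N : Net P T) (good : T → Prop) (m m' : P → ℝ) : Prop :=
  ∃ ms : ℕ → P → ℝ, ms 0 = m ∧
    (∀ k, ∃ t, good t ∧ ∃ α, cfire N t α (ms k) (ms (k+1))) ∧
    Tendsto ms atTop (nhds m')

theorem encNet_wPT_le_one {n : ℕ} (p : EPlace n) (t : ETrans n) : (encNet n).wPT p t ≤ 1 := by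
  unfold encNet
  dsimp only
  split_ifs <;> simp

theorem canon_congr {n : ℕ} {xh yh : MPConfig n} {p : EPlace n} (h : xh p.1 = yh p.1) :
    canon xh p = canon yh p := by
  simp only [canon, h]

theorem canon_eq_half {n : ℕ} {xh : MPConfig n} {p : EPlace n} (h : ∀ v, xh p.1 ≠ .b v) :
    canon xh p = 1/2 := by
  rcases hx : xh p.1 with v | _ | _
  · exact absurd hx (h v)
  all_goals simp only [canon, hx]

/-- enabling monotony: if every Boolean-valued variable of x̂
keeps its value in ŷ, then any transition of the encoding that is at least
0.5-enabled at ⟨ŷ⟩ is at least 0.5-enabled at ⟨x̂⟩. -/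
theorem enabling_monotony {n : ℕ} (xh yh : MPConfig n)
    (h : ∀ i, (∃ v, xh i = MPV.b v) → yh i = xh i) (t : ETrans n) :
    enabGe (encNet n) t (canon yh) (1/2) →
      enabGe (encNet n) t (canon xh) (1/2) := by
  intro hy p hw
  by_cases hb : ∃ v, xh p.1 = .b v
  · rw [canon_congr (h p.1 hb).symm]
    exact hy p hw
  · simp only [not_exists] at hb
    rw [canon_eq_half hb]
    exact mul_le_of_le_one_right (by norm_num) (by exact_mod_cast encNet_wPT_le_one p t)
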